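/- Under the SUTRA ODEs with the integration constant relation M + R = (1/ε)(T + R_T) + c and S + M + R = 1, the new detected infections rate N_T := εβSU satisfies N_T = β(1-ε)(1-c)T - (β(1-ε)/ε)(T + R_T)T. -/

import Mathlib

theorem sutra_NT_identity_general (β ε c : ℝ) (hε : ε ≠ 0)
    (S U T RT M R NT : ℝ → ℝ)
    (hU : ∀ t, U t = ((1 - ε) / ε) * T t)
    (hSMR : ∀ t, S t + M t + R t = 1)
    (hc : ∀ t, M t + R t = (1 / ε) * (T t + RT t) + c)
    (hNT : ∀ t, NT t = ε * β * S t * U t) :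
    ∀ t, NT t = β * (1 - ε) * (1 - c) * T t
        - (β * (1 - ε) / ε) * (T t + RT t) * T t := by
  intro t
  have hS : S t = (1 - c) - (1 / ε) * (T t + RT t) := by linarith [hSMR t, hc t]
  have hεU : ε * U t = (1 - ε) * T t := by
    rw [hU t, ← mul_assoc, mul_div_cancel₀ _ hε]
  calc NT t = β * S t * (ε * U t) := by rw [hNT t]; ring
    _ = β * (1 - ε) * (1 - c) * T t - (β * (1 - ε) / ε) * (T t + RT t) * T t := by
      rw [hS, hεU]; ring

theorem sutra_NT_identity (β γ ε c : ℝ) (hε : ε ≠ 0)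
    (S U T RT M R NT : ℝ → ℝ)
    (hU : ∀ t, U t = ((1 - ε) / ε) * T t)
    (hM : ∀ t, M t = U t + T t)
    (hSMR : ∀ t, S t + M t + R t = 1)
    (hc : ∀ t, M t + R t = (1 / ε) * (T t + RT t) + c)
    (hNT : ∀ t, NT t = ε * β * S t * U t) :
    ∀ t, NT t = β * (1 - ε) * (1 - c) * T t
        - (β * (1 - ε) / ε) * (T t + RT t) * T t :=
  sutra_NT_identity_general β ε c hε S U T RT M R NT hU hSMR hc hNT
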